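/- arXiv:1502.06847 — 7 statements merged into one kernel-verified Lean document; each statement's English description precedes it below -/
import Mathlib

section
/- Let X be a set with a map f : X → X satisfying f ∘ f ∘ f = id, and let G be a (not necessarily abelian) group. For any map φ : X → G, the map ψ : X → G defined pointwise by ψ(p) := φ(f(p))⁻¹ · φ(p) · φ(f(f(p)))⁻¹ · φ(p) is a solution of the hexagon equation: for all p ∈ X, ψ(f(p)) · ψ(p) · ψ(f(f(p))) = e, where e is the identity of G. -/
theorem hexagon_word_eq_one {G : Type*} [Group G] (a b c : G) :
    (c⁻¹ * b * a⁻¹ * b) * (b⁻¹ * a * c⁻¹ * a) * (a⁻¹ * c * b⁻¹ * c) = 1 := by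
  group

/-- For `f : X → X` with `f³ = id` and any `φ : X → G` into a group, the map
`ψ(p) := φ(f p)⁻¹ · φ(p) · φ(f(f p))⁻¹ · φ(p)` solves the hexagon equation
`ψ(f p) · ψ(p) · ψ(f(f p)) = e`. -/
theorem hexagon_solution_of_three_cycle {X G : Type*} [Group G]
    (f : X → X) (hf : f ∘ f ∘ f = id) (φ : X → G)
    (ψ : X → G) (hψ : ∀ p, ψ p = (φ (f p))⁻¹ * φ p * (φ (f (f p)))⁻¹ * φ p) :
    ∀ p : X, ψ (f p) * ψ p * ψ (f (f p)) = 1 := by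
  intro p
  have hf_orbit : f (f (f p)) = p := congrFun hf p
  rw [hψ, hψ, hψ, hf_orbit]
  exact hexagon_word_eq_one (φ p) (φ (f p)) (φ (f (f p)))
end

section
/- Let n ≥ 1, let G and H be additive abelian groups, and let φ : Gⁿ → H. For x = (x₁,…,xₙ) ∈ Gⁿ and 1 ≤ i ≤ n let rᵢ(x) ∈ Gⁿ denote x with its i-th coordinate replaced by −(x₁+⋯+xₙ). If φ is totally symmetric (φ(x∘π) = φ(x) for every permutation π of the coordinates), then ψ := n·φ − Σᵢ₌₁ⁿ φ∘rᵢ satisfies the generalized hexagon equation ψ(x) + Σᵢ₌₁ⁿ ψ(rᵢ(x)) = 0 for all x ∈ Gⁿ. If φ is totally skew-symmetric (φ(x∘π) = sign(π)·φ(x) for every permutation π), then ψ := n·φ + Σᵢ₌₁ⁿ φ∘rᵢ satisfies ψ(x) − Σᵢ₌₁ⁿ ψ(rᵢ(x)) = 0 for all x ∈ Gⁿ. -/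
/-!
For `i ≠ j` we have `rⱼ (rᵢ x) = rⱼ x ∘ (i j)`, because `rᵢ x` has coordinate sum `-xᵢ`, and
`rᵢ` is an involution. Hence if transpositions act on `φ` by a sign `ε = ±1`, then
`Σⱼ φ (rⱼ (rᵢ x)) = φ x + ε (Σⱼ φ (rⱼ x) - φ (rᵢ x))`, and for `ψ := n φ - ε Σᵢ φ ∘ rᵢ` the
identity `ψ x + ε Σᵢ ψ (rᵢ x) = 0` reduces to `ε² = 1`.
-/

open Finset

/-- `replaceCoord i x` is `x` with its `i`-th coordinate replaced by minus the sum of all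
coordinates of `x`. -/
def replaceCoord {n : ℕ} {G : Type*} [AddCommGroup G] (i : Fin n) (x : Fin n → G) :
    Fin n → G :=
  Function.update x i (-(∑ j, x j))

universe u v

section
variable {n : ℕ} {G : Type u} {H : Type v} [AddCommGroup G] [AddCommGroup H]

lemma sum_replaceCoord (i : Fin n) (x : Fin n → G) : ∑ j, replaceCoord i x j = -x i := by
  rw [replaceCoord, sum_update_of_mem (mem_univ i), sdiff_singleton_eq_erase,
    ← add_sum_erase _ x (mem_univ i)]
  abel

lemma replaceCoord_replaceCoord_self (i : Fin n) (x : Fin n → G) :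
    replaceCoord i (replaceCoord i x) = x := by
  rw [replaceCoord, sum_replaceCoord, neg_neg, replaceCoord, Function.update_idem,
    Function.update_eq_self]

lemma replaceCoord_replaceCoord_of_ne {i j : Fin n} (h : i ≠ j) (x : Fin n → G) :
    replaceCoord j (replaceCoord i x) = replaceCoord j x ∘ Equiv.swap i j := by
  ext k
  rw [replaceCoord, sum_replaceCoord, neg_neg]
  simp only [replaceCoord, Function.comp_apply, Function.update_apply, Equiv.swap_apply_def]
  split_ifs <;> simp_all

-- The paper's `ψ` is the case `ε = 1` for symmetric `φ` and `ε = -1` for skew-symmetric `φ`.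
def hexagonSymmetrization (ε : ℤˣ) (φ : (Fin n → G) → H) (x : Fin n → G) : H :=
  n • φ x - (ε : ℤ) • ∑ i, φ (replaceCoord i x)

variable {ε : ℤˣ} {φ : (Fin n → G) → H}

lemma sum_comp_replaceCoord_replaceCoord
    (hφ : ∀ i j, i ≠ j → ∀ x, φ (x ∘ Equiv.swap i j) = (ε : ℤ) • φ x) (i : Fin n)
    (x : Fin n → G) :
    ∑ j, φ (replaceCoord j (replaceCoord i x)) =
      φ x + (ε : ℤ) • (∑ j, φ (replaceCoord j x) - φ (replaceCoord i x)) := by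
  rw [← add_sum_erase _ _ (mem_univ i), replaceCoord_replaceCoord_self,
    ← sum_erase_eq_sub (mem_univ i), smul_sum]
  refine congrArg (φ x + ·) (sum_congr rfl fun j hj => ?_)
  rw [replaceCoord_replaceCoord_of_ne (ne_of_mem_erase hj).symm, hφ i j (ne_of_mem_erase hj).symm]

theorem hexagonSymmetrization_add_smul_sum
    (hφ : ∀ i j, i ≠ j → ∀ x, φ (x ∘ Equiv.swap i j) = (ε : ℤ) • φ x) (x : Fin n → G) :
    hexagonSymmetrization ε φ x + (ε : ℤ) • ∑ i, hexagonSymmetrization ε φ (replaceCoord i x)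
      = 0 := by
  have hε : (ε : ℤ) * ε = 1 := by rw [← Units.val_mul, Int.units_mul_self, Units.val_one]
  simp only [hexagonSymmetrization, sum_comp_replaceCoord_replaceCoord hφ, sum_sub_distrib,
    sum_add_distrib, smul_sub, smul_add, ← smul_sum, sum_const, card_univ, Fintype.card_fin,
    smul_smul, hε]
  module
end

theorem generalized_hexagon_symmetrization_general {n : ℕ}
    {G H : Type*} [AddCommGroup G] [AddCommGroup H] (φ : (Fin n → G) → H) :
    ((∀ (π : Equiv.Perm (Fin n)) (x : Fin n → G), φ (x ∘ π) = φ x) →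
      ∀ x : Fin n → G,
        (fun y => n • φ y - ∑ i, φ (replaceCoord i y)) x +
          ∑ i, (fun y => n • φ y - ∑ i, φ (replaceCoord i y)) (replaceCoord i x) = 0) ∧
    ((∀ (π : Equiv.Perm (Fin n)) (x : Fin n → G),
        φ (x ∘ π) = (Equiv.Perm.sign π : ℤ) • φ x) →
      ∀ x : Fin n → G,
        (fun y => n • φ y + ∑ i, φ (replaceCoord i y)) x -
          ∑ i, (fun y => n • φ y + ∑ i, φ (replaceCoord i y)) (replaceCoord i x) = 0) := by
  constructor
  · intro hsym x
    have hφ (i j : Fin n) (_ : i ≠ j) (y : Fin n → G) :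
        φ (y ∘ Equiv.swap i j) = ((1 : ℤˣ) : ℤ) • φ y := by
      rw [hsym, Units.val_one, one_smul]
    simpa [hexagonSymmetrization] using hexagonSymmetrization_add_smul_sum hφ x
  · intro hskew x
    have hφ (i j : Fin n) (hij : i ≠ j) (y : Fin n → G) :
        φ (y ∘ Equiv.swap i j) = ((-1 : ℤˣ) : ℤ) • φ y := by
      rw [hskew, Equiv.Perm.sign_swap hij]
    simpa [hexagonSymmetrization, sub_eq_add_neg] using hexagonSymmetrization_add_smul_sum hφ x

/-- If `φ : Gⁿ → H` is totally symmetric then `ψ := n·φ - Σᵢ φ∘rᵢ` solves the generalized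
hexagon equation `ψ + Σᵢ ψ∘rᵢ = 0`; if `φ` is totally skew-symmetric then
`ψ := n·φ + Σᵢ φ∘rᵢ` solves `ψ - Σᵢ ψ∘rᵢ = 0`. -/
theorem generalized_hexagon_symmetrization {n : ℕ} (hn : 1 ≤ n)
    {G H : Type*} [AddCommGroup G] [AddCommGroup H] (φ : (Fin n → G) → H) :
    ((∀ (π : Equiv.Perm (Fin n)) (x : Fin n → G), φ (x ∘ π) = φ x) →
      ∀ x : Fin n → G,
        (fun y => n • φ y - ∑ i, φ (replaceCoord i y)) x +
          ∑ i, (fun y => n • φ y - ∑ i, φ (replaceCoord i y)) (replaceCoord i x) = 0) ∧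
    ((∀ (π : Equiv.Perm (Fin n)) (x : Fin n → G),
        φ (x ∘ π) = (Equiv.Perm.sign π : ℤ) • φ x) →
      ∀ x : Fin n → G,
        (fun y => n • φ y + ∑ i, φ (replaceCoord i y)) x -
          ∑ i, (fun y => n • φ y + ∑ i, φ (replaceCoord i y)) (replaceCoord i x) = 0) :=
  generalized_hexagon_symmetrization_general φ
end

section
/- Let G be any (not necessarily abelian) group and n ≥ 1. The map P : Gⁿ → Gⁿ defined by P(x₁,…,xₙ) := (x₂⁻¹ ∘ x₃⁻¹ ∘ ⋯ ∘ xₙ⁻¹ ∘ x₁⁻¹, x₃, x₄, …, xₙ, x₁) satisfies P^{n+1} = id, i.e. P represents the cyclic group ℤ/(n+1) by automorphisms of the set Gⁿ. -/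
/-- The map `P(x₁,…,xₙ) = (x₂⁻¹∘x₃⁻¹∘⋯∘xₙ⁻¹∘x₁⁻¹, x₃, …, xₙ, x₁)` (0-indexed: output
coordinate `k ≠ 0` is `x (k+1 mod n)`, coordinate `0` is the ordered product
`(x 1)⁻¹ * (x 2)⁻¹ * ⋯ * (x (n-1))⁻¹ * (x 0)⁻¹`). -/
def cycleMap (n : ℕ) [NeZero n] {G : Type*} [Group G] (x : Fin n → G) : Fin n → G :=
  fun k => if k = 0 then (List.ofFn fun i : Fin n => (x (i + 1))⁻¹).prod else x (k + 1)

/-!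
Encode `x ∈ Gⁿ` by the word `w(x) = [x₂⁻¹, …, xₙ⁻¹, x₁⁻¹]`, whose product is the new first
coordinate `s` of `P x`, and close it up to the word `w(x) ++ [s⁻¹]` of length `n + 1` with
product `1`. The word of `P x` is `[x₃⁻¹, …, xₙ⁻¹, x₁⁻¹, s⁻¹]`, and since a cyclic rotation of
a word with product `1` again has product `1`, closing it up appends `x₂⁻¹`. So `P` acts on
closed words as a rotation by one letter, and `n + 1` rotations of a word of length `n + 1`
give it back.
-/

section Group

variable {G : Type*} [Group G]

def appendProdInv (l : List G) : List G := l ++ [l.prod⁻¹]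

theorem appendProdInv_injective : Function.Injective (appendProdInv (G := G)) := fun l l' h => by
  simpa [appendProdInv] using congrArg List.dropLast h

theorem length_appendProdInv (l : List G) : (appendProdInv l).length = l.length + 1 := by
  simp [appendProdInv]

theorem rotate_one_appendProdInv {l : List G} (hl : l ≠ []) :
    (appendProdInv l).rotate 1 = appendProdInv (l.tail ++ [l.prod⁻¹]) := by
  obtain ⟨a, t, rfl⟩ := List.exists_cons_of_ne_nil hl
  simp [appendProdInv]

def cycleWord {n : ℕ} [NeZero n] (x : Fin n → G) : List G :=
  List.ofFn fun i : Fin n => (x (i + 1))⁻¹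

theorem cycleWord_injective {n : ℕ} [NeZero n] :
    Function.Injective (cycleWord (n := n) (G := G)) := fun x y h => by
  have hinv := List.ofFn_injective h
  funext j
  simpa using congrFun hinv (j - 1)

theorem cycleWord_ne_nil {n : ℕ} [NeZero n] (x : Fin n → G) : cycleWord x ≠ [] := by
  simp [cycleWord, NeZero.ne n]

theorem cycleWord_cycleMap {m : ℕ} (x : Fin (m + 1) → G) :
    cycleWord (cycleMap (m + 1) x) = (cycleWord x).tail ++ [(cycleWord x).prod⁻¹] := by
  have hsucc (i : Fin m) : cycleMap (m + 1) x (i.castSucc + 1) = x (i.succ + 1) := by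
    simp [cycleMap, Fin.coeSucc_eq_succ, Fin.succ_ne_zero]
  have hlast : cycleMap (m + 1) x (Fin.last m + 1) = (cycleWord x).prod := by
    simp [cycleMap, cycleWord]
  conv_lhs => rw [cycleWord, List.ofFn_succ', List.concat_eq_append]
  simp only [hsucc, hlast]
  rw [cycleWord, List.ofFn_succ, List.tail_cons]

theorem appendProdInv_cycleWord_iterate_cycleMap {m : ℕ} (k : ℕ) (x : Fin (m + 1) → G) :
    appendProdInv (cycleWord ((cycleMap (m + 1))^[k] x)) =
      (appendProdInv (cycleWord x)).rotate k := by
  induction k with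
  | zero => simp
  | succ k ih =>
    rw [Function.iterate_succ_apply', cycleWord_cycleMap,
      ← rotate_one_appendProdInv (cycleWord_ne_nil _), ih, List.rotate_rotate]

end Group

/-- `P` satisfies `P^{n+1} = id`, hence represents `ℤ/(n+1)` on `Gⁿ`. -/
theorem cycleMap_order (n : ℕ) [NeZero n] {G : Type*} [Group G] :
    (cycleMap n (G := G))^[n + 1] = id := by
  obtain ⟨m, rfl⟩ := Nat.exists_eq_succ_of_ne_zero (NeZero.ne n)
  funext x
  apply cycleWord_injective
  apply appendProdInv_injective
  have hlen : (appendProdInv (cycleWord x)).length = m + 1 + 1 := by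
    simp [length_appendProdInv, cycleWord]
  rw [appendProdInv_cycleWord_iterate_cycleMap, ← hlen, List.rotate_length, id]
end

section
/- Let G be an additive abelian group, [·,·] : G × G → G a map that is a group homomorphism in each argument, and n ≥ 2. Define, for a totally symmetric map ψ : Gⁿ → G, (∂ψ)(x₁,…,xₙ) := [x₁+⋯+xₙ, ψ(x₁,…,xₙ) + Σᵢ₌₁ⁿ ψ(x₁,…,x_{i−1}, −(x₁+⋯+xₙ), x_{i+1},…,xₙ)]. Then ∂ψ is again totally symmetric and ∂ is a square-zero map on totally symmetric maps: ∂(∂ψ) = 0 for every totally symmetric ψ : Gⁿ → G. -/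
open Finset

/-- The differential `∂` associated to a biadditive bracket:
`(∂ψ)(x₁,…,xₙ) = [x₁+⋯+xₙ, ψ(x) + Σᵢ ψ(x with i-th coordinate replaced by -(x₁+⋯+xₙ))]`. -/
def hexDiff {n : ℕ} {G : Type*} [AddCommGroup G] (br : G → G → G)
    (ψ : (Fin n → G) → G) : (Fin n → G) → G :=
  fun x => br (∑ i, x i)
    (ψ x + ∑ i : Fin n, ψ (Function.update x i (-(∑ j, x j))))

/-!
Write `∂ψ(x) = [s, A(x)]` with `s = x₁+⋯+xₙ`. Replacing `xᵢ` by `-s` turns the coordinate sum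
into `-xᵢ`, and by symmetry of `ψ` it leaves `A` unchanged: the term that now replaces the new
`i`-th coordinate by `xᵢ` gives back `ψ(x)`, and the others are permutations of the remaining
terms of `A(x)`. Hence the second argument of `∂(∂ψ)(x)` is `[s, A] + Σᵢ [-xᵢ, A] = [0, A] = 0`.
-/

section Updates

variable {ι G : Type*} [DecidableEq ι]

theorem sum_update_neg_sum [Fintype ι] [AddCommGroup G] (x : ι → G) (i : ι) :
    ∑ j, Function.update x i (-∑ k, x k) j = -x i := by
  rw [sum_update_of_mem (mem_univ i), ← add_sum_erase univ x (mem_univ i), sdiff_singleton_eq_erase]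
  abel

theorem update_update_apply_comp_swap {α : Type*} (x : ι → α) {i j : ι} (hij : i ≠ j) (a : α) :
    Function.update (Function.update x i a) j (x i) = Function.update x j a ∘ Equiv.swap i j := by
  ext k
  rcases eq_or_ne k i with rfl | hki
  · simp [hij]
  rcases eq_or_ne k j with rfl | hkj
  · simp [hij]
  · simp [hki, hkj, Equiv.swap_apply_of_ne_of_ne]

end Updates

def IsTotallySymmetric {ι α β : Type*} (ψ : (ι → α) → β) : Prop :=
  ∀ (π : Equiv.Perm ι) (x : ι → α), ψ (x ∘ π) = ψ x

section HexDiff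

variable {n : ℕ} {G : Type*} [AddCommGroup G] {ψ : (Fin n → G) → G}

def hexInner (ψ : (Fin n → G) → G) (x : Fin n → G) : G :=
  ψ x + ∑ i, ψ (Function.update x i (-∑ j, x j))

theorem hexDiff_apply (br : G → G → G) (ψ : (Fin n → G) → G) (x : Fin n → G) :
    hexDiff br ψ x = br (∑ i, x i) (hexInner ψ x) :=
  rfl

theorem IsTotallySymmetric.hexInner_update_neg_sum (hψ : IsTotallySymmetric ψ)
    (x : Fin n → G) (i : Fin n) :
    hexInner ψ (Function.update x i (-∑ j, x j)) = hexInner ψ x := by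
  have hterm (j : Fin n) (hj : j ≠ i) :
      ψ (Function.update (Function.update x i (-∑ k, x k)) j (x i)) =
        ψ (Function.update x j (-∑ k, x k)) := by
    rw [update_update_apply_comp_swap x hj.symm, hψ]
  rw [hexInner, hexInner, sum_update_neg_sum, neg_neg,
    ← add_sum_erase _ (fun j => ψ (Function.update _ j (x i))) (mem_univ i),
    ← add_sum_erase _ (fun j => ψ (Function.update x j _)) (mem_univ i),
    Function.update_idem, Function.update_eq_self,
    sum_congr rfl fun j hj => hterm j (ne_of_mem_erase hj)]
  abel

theorem IsTotallySymmetric.hexInner_hexDiff (br : G → G → G)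
    (hbl : ∀ a b c : G, br (a + b) c = br a c + br b c) (hψ : IsTotallySymmetric ψ)
    (x : Fin n → G) : hexInner (hexDiff br ψ) x = 0 := by
  let brLeft : G →+ G := AddMonoidHom.mk' (br · (hexInner ψ x)) (hbl · · _)
  calc hexInner (hexDiff br ψ) x
      = brLeft (∑ i, x i) + ∑ i, brLeft (-x i) := by
        rw [hexInner]
        simp only [hexDiff_apply, sum_update_neg_sum, hψ.hexInner_update_neg_sum]
        rfl
    _ = 0 := by rw [← map_sum, ← map_add, sum_neg_distrib, add_neg_cancel, map_zero]

theorem IsTotallySymmetric.hexInner (hψ : IsTotallySymmetric ψ) :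
    IsTotallySymmetric (hexInner ψ) := by
  intro π x
  have hsum : ∑ i, (x ∘ π) i = ∑ i, x i := Equiv.sum_comp π x
  have hupdate (i : Fin n) (v : G) :
      Function.update (x ∘ π) i v = Function.update x (π i) v ∘ π := by
    rw [Function.update_comp_equiv, Equiv.symm_apply_apply]
  simp only [_root_.hexInner, hsum, hupdate, hψ π]
  rw [Equiv.sum_comp π (fun i => ψ (Function.update x i (-∑ j, x j)))]

theorem IsTotallySymmetric.hexDiff (br : G → G → G) (hψ : IsTotallySymmetric ψ) :
    IsTotallySymmetric (hexDiff br ψ) := by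
  intro π x
  rw [hexDiff_apply, hexDiff_apply, hψ.hexInner π x]
  exact congrArg (br · _) (Equiv.sum_comp π x)

end HexDiff

theorem hexDiff_squares_to_zero_general {n : ℕ} {G : Type*} [AddCommGroup G]
    (br : G → G → G)
    (hbl : ∀ a b c : G, br (a + b) c = br a c + br b c)
    (hbr : ∀ a b c : G, br a (b + c) = br a b + br a c)
    (ψ : (Fin n → G) → G)
    (hsym : ∀ (π : Equiv.Perm (Fin n)) (x : Fin n → G), ψ (x ∘ π) = ψ x) :
    (∀ (π : Equiv.Perm (Fin n)) (x : Fin n → G), hexDiff br ψ (x ∘ π) = hexDiff br ψ x) ∧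
      hexDiff br (hexDiff br ψ) = 0 := by
  have hψ : IsTotallySymmetric ψ := hsym
  refine ⟨hψ.hexDiff br, funext fun x => ?_⟩
  let brRight : G →+ G := AddMonoidHom.mk' (br (∑ i, x i)) (hbr _)
  rw [hexDiff_apply, hψ.hexInner_hexDiff br hbl x]
  exact map_zero brRight

/-- If `[·,·]` is additive in each argument and `n ≥ 2`, then `∂` preserves total symmetry
and squares to zero on totally symmetric maps. -/
theorem hexDiff_squares_to_zero {n : ℕ} (hn : 2 ≤ n) {G : Type*} [AddCommGroup G]
    (br : G → G → G)
    (hbl : ∀ a b c : G, br (a + b) c = br a c + br b c)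
    (hbr : ∀ a b c : G, br a (b + c) = br a b + br a c)
    (ψ : (Fin n → G) → G)
    (hsym : ∀ (π : Equiv.Perm (Fin n)) (x : Fin n → G), ψ (x ∘ π) = ψ x) :
    (∀ (π : Equiv.Perm (Fin n)) (x : Fin n → G), hexDiff br ψ (x ∘ π) = hexDiff br ψ x) ∧
      hexDiff br (hexDiff br ψ) = 0 :=
  hexDiff_squares_to_zero_general br hbl hbr ψ hsym
end

section
/- Let (X, τ) be a torsor and define f₁, f₂, f₃ : X³ → X³ by f₁(x,y,z) = (τ(x,y,z), z, y), f₂(x,y,z) = (y, x, τ(x,y,z)) and f₃(x,y,z) = (z, τ(x,y,z), x). Then f₁ ∘ f₁ = id, f₂ ∘ f₂ = id, and f₁ ∘ f₂ = f₂ ∘ f₁ = f₃; consequently {id, f₁, f₂, f₃} realizes the Klein four-group as bijections of X³. -/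
section TorsorCancel

variable {X : Type*} {τ : X → X → X → X}
  (h1 : ∀ x y : X, τ x y y = x) (h2 : ∀ x y : X, τ y y x = x)
  (h3 : ∀ x y z v w : X, τ (τ x y z) v w = τ x y (τ z v w))
include h1 h2 h3

theorem torsor_cancel_right (x y z : X) : τ (τ x y z) z y = x := by
  rw [h3, h2, h1]

theorem torsor_cancel_left (x y z : X) : τ y x (τ x y z) = z := by
  rw [← h3, h1, h2]

end TorsorCancel

theorem torsor_klein_four_general {X : Type*}
    (τ : X → X → X → X)
    (h1 : ∀ x y : X, τ x y y = x)
    (h2 : ∀ x y : X, τ y y x = x)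
    (h3 : ∀ x y z v w : X, τ (τ x y z) v w = τ x y (τ z v w))
    (f1 f2 f3 : X × X × X → X × X × X)
    (hf1 : ∀ x y z : X, f1 (x, y, z) = (τ x y z, z, y))
    (hf2 : ∀ x y z : X, f2 (x, y, z) = (y, x, τ x y z))
    (hf3 : ∀ x y z : X, f3 (x, y, z) = (z, τ x y z, x)) :
    f1 ∘ f1 = id ∧ f2 ∘ f2 = id ∧ f1 ∘ f2 = f3 ∧ f2 ∘ f1 = f3 := by
  have cancel_right := torsor_cancel_right h1 h2 h3
  have cancel_left := torsor_cancel_left h1 h2 h3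
  refine ⟨?_, ?_, ?_, ?_⟩ <;> funext ⟨x, y, z⟩ <;>
    simp only [Function.comp_apply, id, hf1, hf2, hf3, cancel_right, cancel_left]

/-- For a torsor `(X,τ)`, the maps `f₁(x,y,z) = (τ(x,y,z),z,y)`,
`f₂(x,y,z) = (y,x,τ(x,y,z))` and `f₃(x,y,z) = (z,τ(x,y,z),x)` satisfy `f₁² = f₂² = id`
and `f₁∘f₂ = f₂∘f₁ = f₃`, so `{id, f₁, f₂, f₃}` realizes the Klein four-group as
bijections of `X³`. -/
theorem torsor_klein_four {X : Type*} [Nonempty X]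
    (τ : X → X → X → X)
    (h1 : ∀ x y : X, τ x y y = x)
    (h2 : ∀ x y : X, τ y y x = x)
    (h3 : ∀ x y z v w : X, τ (τ x y z) v w = τ x y (τ z v w))
    (f1 f2 f3 : X × X × X → X × X × X)
    (hf1 : ∀ x y z : X, f1 (x, y, z) = (τ x y z, z, y))
    (hf2 : ∀ x y z : X, f2 (x, y, z) = (y, x, τ x y z))
    (hf3 : ∀ x y z : X, f3 (x, y, z) = (z, τ x y z, x)) :
    f1 ∘ f1 = id ∧ f2 ∘ f2 = id ∧ f1 ∘ f2 = f3 ∧ f2 ∘ f1 = f3 :=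
  torsor_klein_four_general τ h1 h2 h3 f1 f2 f3 hf1 hf2 hf3
end

section
/- Let (X, τ) be a torsor and (G, +, [·,·]) an abelian group whose biadditive bracket [·,·] is moreover skew-symmetric and satisfies the Jacobi identity (a Lie bracket). Let γ : X³ → G satisfy γ∘f₁ + γ∘f₂ = 0 and define ∂^γφ := [γ, φ∘f₁ + φ∘f₂] pointwise for φ : X³ → G. Then for all maps φ, ϕ : X³ → G the modified Leibniz rule holds: ∂^γ[φ, ϕ + ϕ∘f₃] = ∂^γ[φ + φ∘f₃, ϕ] = ∂^{∂^γφ}ϕ − ∂^{∂^γϕ}φ, where the brackets of G-valued maps are taken pointwise and the superscript maps ∂^γφ, ∂^γϕ again satisfy the symmetry (·)∘f₁ + (·)∘f₂ = 0 so that the right-hand side is well defined. -/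
/-!
Since `f₃ ∘ f₁ = f₂` and `f₃ ∘ f₂ = f₁`, the map `ψ + ψ ∘ f₃` takes the value
`Sψ := ψ ∘ f₁ + ψ ∘ f₂` at both `f₁ p` and `f₂ p`. By biadditivity, both `∂^γ[φ, ϕ + ϕ ∘ f₃]` and
`∂^γ[φ + φ ∘ f₃, ϕ]` are therefore `[γ, [Sφ, Sϕ]]` pointwise, and the Jacobi identity in the
Leibniz form `[g, [a, b]] = [[g, a], b] - [[g, b], a]` turns this into `∂^{∂^γφ}ϕ − ∂^{∂^γϕ}φ`.
-/

theorem bracket_bracket_eq_sub_of_jacobi {G : Type*} [AddCommGroup G] {br : G → G → G}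
    (hbr : ∀ a b c : G, br a (b + c) = br a b + br a c)
    (hskew : ∀ a b : G, br a b = -br b a)
    (hjac : ∀ a b c : G, br a (br b c) + br b (br c a) + br c (br a b) = 0) (a b c : G) :
    br a (br b c) = br (br a b) c - br (br a c) b := by
  have hneg : ∀ x y : G, br x (-y) = -br x y := fun x => map_neg (AddMonoidHom.mk' (br x) (hbr x))
  have h := hjac a b c
  rw [hskew c a, hneg, hskew b (br a c), hskew c (br a b), neg_neg] at h
  rw [eq_sub_iff_add_eq]
  exact add_neg_eq_zero.mp h

section Torsor

variable {X : Type*} {τ : X → X → X → X} {f1 f2 f3 : X × X × X → X × X × X}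

theorem torsor_f3_f1_apply (h1 : ∀ x y : X, τ x y y = x) (h2 : ∀ x y : X, τ y y x = x)
    (h3 : ∀ x y z v w : X, τ (τ x y z) v w = τ x y (τ z v w))
    (hf1 : ∀ x y z : X, f1 (x, y, z) = (τ x y z, z, y))
    (hf2 : ∀ x y z : X, f2 (x, y, z) = (y, x, τ x y z))
    (hf3 : ∀ x y z : X, f3 (x, y, z) = (z, τ x y z, x)) (p : X × X × X) :
    f3 (f1 p) = f2 p := by
  obtain ⟨x, y, z⟩ := p
  rw [hf1, hf3, hf2, h3, h2, h1]

theorem torsor_f3_f2_apply (h1 : ∀ x y : X, τ x y y = x) (h2 : ∀ x y : X, τ y y x = x)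
    (h3 : ∀ x y z v w : X, τ (τ x y z) v w = τ x y (τ z v w))
    (hf1 : ∀ x y z : X, f1 (x, y, z) = (τ x y z, z, y))
    (hf2 : ∀ x y z : X, f2 (x, y, z) = (y, x, τ x y z))
    (hf3 : ∀ x y z : X, f3 (x, y, z) = (z, τ x y z, x)) (p : X × X × X) :
    f3 (f2 p) = f1 p := by
  obtain ⟨x, y, z⟩ := p
  rw [hf2, hf3, hf1, ← h3, h1, h2]

end Torsor

theorem torsor_modified_leibniz_general {X G : Type*} [AddCommGroup G]
    (τ : X → X → X → X)
    (h1 : ∀ x y : X, τ x y y = x)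
    (h2 : ∀ x y : X, τ y y x = x)
    (h3 : ∀ x y z v w : X, τ (τ x y z) v w = τ x y (τ z v w))
    (f1 f2 f3 : X × X × X → X × X × X)
    (hf1 : ∀ x y z : X, f1 (x, y, z) = (τ x y z, z, y))
    (hf2 : ∀ x y z : X, f2 (x, y, z) = (y, x, τ x y z))
    (hf3 : ∀ x y z : X, f3 (x, y, z) = (z, τ x y z, x))
    (br : G → G → G)
    (hbl : ∀ a b c : G, br (a + b) c = br a c + br b c)
    (hbr : ∀ a b c : G, br a (b + c) = br a b + br a c)
    (hskew : ∀ a b : G, br a b = -br b a)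
    (hjac : ∀ a b c : G, br a (br b c) + br b (br c a) + br c (br a b) = 0)
    (D : (X × X × X → G) → (X × X × X → G) → (X × X × X → G))
    (hD : ∀ (γ' φ : X × X × X → G) (p : X × X × X),
      D γ' φ p = br (γ' p) (φ (f1 p) + φ (f2 p)))
    (γ : X × X × X → G) :
    ∀ φ ϕ : X × X × X → G,
      D γ (fun p => br (φ p) (ϕ p + ϕ (f3 p))) =
          D γ (fun p => br (φ p + φ (f3 p)) (ϕ p)) ∧
        D γ (fun p => br (φ p) (ϕ p + ϕ (f3 p))) =
          fun p => D (D γ φ) ϕ p - D (D γ ϕ) φ p := by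
  intro φ ϕ
  have h31 := torsor_f3_f1_apply h1 h2 h3 hf1 hf2 hf3
  have h32 := torsor_f3_f2_apply h1 h2 h3 hf1 hf2 hf3
  have hright : ∀ p, D γ (fun p => br (φ p) (ϕ p + ϕ (f3 p))) p =
      br (γ p) (br (φ (f1 p) + φ (f2 p)) (ϕ (f1 p) + ϕ (f2 p))) := by
    intro p
    rw [hD, h31, h32, add_comm (ϕ (f2 p)), ← hbl]
  have hleft : ∀ p, D γ (fun p => br (φ p + φ (f3 p)) (ϕ p)) p =
      br (γ p) (br (φ (f1 p) + φ (f2 p)) (ϕ (f1 p) + ϕ (f2 p))) := by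
    intro p
    rw [hD, h31, h32, add_comm (φ (f2 p)), ← hbr]
  refine ⟨funext fun p => (hright p).trans (hleft p).symm, funext fun p => ?_⟩
  rw [hright, hD (D γ φ), hD (D γ ϕ), hD γ φ, hD γ ϕ]
  exact bracket_bracket_eq_sub_of_jacobi hbr hskew hjac _ _ _

/-- Modified Leibniz rule: for a torsor `(X,τ)` with the maps `f₁, f₂, f₃` of `X³`, an
abelian group `G` with a biadditive skew-symmetric bracket satisfying the Jacobi identity,
and `γ : X³ → G` with `γ∘f₁ + γ∘f₂ = 0`, setting `∂^γφ := [γ, φ∘f₁ + φ∘f₂]` we have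
`∂^γ[φ, ϕ + ϕ∘f₃] = ∂^γ[φ + φ∘f₃, ϕ] = ∂^{∂^γφ}ϕ − ∂^{∂^γϕ}φ`. -/
theorem torsor_modified_leibniz {X G : Type*} [Nonempty X] [AddCommGroup G]
    (τ : X → X → X → X)
    (h1 : ∀ x y : X, τ x y y = x)
    (h2 : ∀ x y : X, τ y y x = x)
    (h3 : ∀ x y z v w : X, τ (τ x y z) v w = τ x y (τ z v w))
    (f1 f2 f3 : X × X × X → X × X × X)
    (hf1 : ∀ x y z : X, f1 (x, y, z) = (τ x y z, z, y))
    (hf2 : ∀ x y z : X, f2 (x, y, z) = (y, x, τ x y z))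
    (hf3 : ∀ x y z : X, f3 (x, y, z) = (z, τ x y z, x))
    (br : G → G → G)
    (hbl : ∀ a b c : G, br (a + b) c = br a c + br b c)
    (hbr : ∀ a b c : G, br a (b + c) = br a b + br a c)
    (hskew : ∀ a b : G, br a b = -br b a)
    (hjac : ∀ a b c : G, br a (br b c) + br b (br c a) + br c (br a b) = 0)
    (D : (X × X × X → G) → (X × X × X → G) → (X × X × X → G))
    (hD : ∀ (γ' φ : X × X × X → G) (p : X × X × X),
      D γ' φ p = br (γ' p) (φ (f1 p) + φ (f2 p)))
    (γ : X × X × X → G) (hγ : ∀ p, γ (f1 p) + γ (f2 p) = 0) :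
    ∀ φ ϕ : X × X × X → G,
      D γ (fun p => br (φ p) (ϕ p + ϕ (f3 p))) =
          D γ (fun p => br (φ p + φ (f3 p)) (ϕ p)) ∧
        D γ (fun p => br (φ p) (ϕ p + ϕ (f3 p))) =
          fun p => D (D γ φ) ϕ p - D (D γ ϕ) φ p :=
  torsor_modified_leibniz_general τ h1 h2 h3 f1 f2 f3 hf1 hf2 hf3 br hbl hbr hskew hjac D hD γ
end

section
/- Let (X, τ) be a torsor. The map ι : X³ → X³ defined by ι(x,y,z) := (τ(y,x,z), x, τ(τ(y,x,z), x, y)) is a 3-cycle: its second iterate is ι²(x,y,z) = (y, τ(y,x,z), τ(y, τ(y,x,z), x)) and ι³ = id. -/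
theorem torsor_left_cancel {X : Type*} (τ : X → X → X → X)
    (h1 : ∀ x y : X, τ x y y = x) (h2 : ∀ x y : X, τ y y x = x)
    (h3 : ∀ x y z v w : X, τ (τ x y z) v w = τ x y (τ z v w)) (a b c : X) :
    τ a b (τ b a c) = c := by
  rw [← h3, h1, h2]

theorem torsor_three_cycle_general {X : Type*}
    (τ : X → X → X → X)
    (h1 : ∀ x y : X, τ x y y = x)
    (h2 : ∀ x y : X, τ y y x = x)
    (h3 : ∀ x y z v w : X, τ (τ x y z) v w = τ x y (τ z v w))
    (ι : X × X × X → X × X × X)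
    (hι : ∀ x y z : X, ι (x, y, z) = (τ y x z, x, τ (τ y x z) x y)) :
    (∀ x y z : X, ι^[2] (x, y, z) = (y, τ y x z, τ y (τ y x z) x)) ∧ ι^[3] = id := by
  have cancel := torsor_left_cancel τ h1 h2 h3
  have iterate_two : ∀ x y z : X, ι (ι (x, y, z)) = (y, τ y x z, τ y (τ y x z) x) := by
    intro x y z
    rw [hι, hι, cancel]
  refine ⟨iterate_two, ?_⟩
  funext ⟨x, y, z⟩
  change ι (ι (ι (x, y, z))) = (x, y, z)
  rw [iterate_two, hι, cancel, cancel]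

/-- For a torsor `(X,τ)`, the map `ι(x,y,z) = (τ(y,x,z), x, τ(τ(y,x,z),x,y))` is a
3-cycle: `ι²(x,y,z) = (y, τ(y,x,z), τ(y,τ(y,x,z),x))` and `ι³ = id`. -/
theorem torsor_three_cycle {X : Type*} [Nonempty X]
    (τ : X → X → X → X)
    (h1 : ∀ x y : X, τ x y y = x)
    (h2 : ∀ x y : X, τ y y x = x)
    (h3 : ∀ x y z v w : X, τ (τ x y z) v w = τ x y (τ z v w))
    (ι : X × X × X → X × X × X)
    (hι : ∀ x y z : X, ι (x, y, z) = (τ y x z, x, τ (τ y x z) x y)) :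
    (∀ x y z : X, ι^[2] (x, y, z) = (y, τ y x z, τ y (τ y x z) x)) ∧ ι^[3] = id :=
  torsor_three_cycle_general τ h1 h2 h3 ι hι
end
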